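/- Let (A,B) be an m×n bimatrix game with all payoff entries in [0,1]. Fix any pure strategy i of the row player; let j be a pure best response of the column player to i (i.e., B_{ij} ≥ B_{ij'} for all j'), and let k be a pure best response of the row player to j (i.e., A_{kj} ≥ A_{i'j} for all i'). Then the profile in which the row player plays i with probability 1/2 and k with probability 1/2, and the column player plays j with probability 1, is a (1/2)-approximate Nash equilibrium. -/

import Mathlib

open Matrix

/-- A probability vector over a finite index set. -/
def IsProbVec {ι : Type*} [Fintype ι] (x : ι → ℝ) : Prop :=
  (∀ i, 0 ≤ x i) ∧ ∑ i, x i = 1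

/-- `ε`-approximate Nash equilibrium of the bimatrix game `(A, B)`: no player can gain
more than `ε` by a unilateral mixed deviation. -/
def IsEpsNashEq {ι κ : Type*} [Fintype ι] [Fintype κ]
    (A B : Matrix ι κ ℝ) (ε : ℝ) (x : ι → ℝ) (y : κ → ℝ) : Prop :=
  IsProbVec x ∧ IsProbVec y ∧
    (∀ x' : ι → ℝ, IsProbVec x' →
      dotProduct x' (A.mulVec y) - ε ≤ dotProduct x (A.mulVec y)) ∧
    (∀ y' : κ → ℝ, IsProbVec y' →
      dotProduct x (B.mulVec y') - ε ≤ dotProduct x (B.mulVec y))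

/-!
The row player's payoff against `j` is at least `A k j / 2`, while any deviation earns at most
`A k j`, since `k` is a best response to `j`. The column player earns at least `B i j / 2`;
a deviation earns at most `B i j` on row `i` (as `j` is a best response to `i`) and at most `1`
on row `k`, so at most `B i j / 2 + 1 / 2` in total.
-/

variable {ι κ : Type*}

theorem isProbVec_single [Fintype ι] [DecidableEq ι] (i : ι) :
    IsProbVec (Pi.single i (1 : ℝ)) :=
  ⟨fun t => by rw [Pi.single_apply]; split_ifs <;> norm_num, by simp⟩

theorem isProbVec_single_half_add_single_half [Fintype ι] [DecidableEq ι] (i k : ι) :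
    IsProbVec (Pi.single i (1 / 2 : ℝ) + Pi.single k (1 / 2)) := by
  refine ⟨fun t => ?_, ?_⟩
  · simp only [Pi.add_apply, Pi.single_apply]
    split_ifs <;> norm_num
  · simp only [Pi.add_apply, Finset.sum_add_distrib, Finset.sum_pi_single', Finset.mem_univ,
      if_true]
    norm_num

theorem IsProbVec.dotProduct_le [Fintype ι] {x v : ι → ℝ} (hx : IsProbVec x) {c : ℝ}
    (hv : ∀ t, v t ≤ c) : x ⬝ᵥ v ≤ c :=
  calc x ⬝ᵥ v = ∑ t, x t * v t := rfl
    _ ≤ ∑ t, x t * c := Finset.sum_le_sum fun t _ => mul_le_mul_of_nonneg_left (hv t) (hx.1 t)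
    _ = c := by rw [← Finset.sum_mul, hx.2, one_mul]

theorem IsProbVec.mulVec_le [Fintype κ] {y : κ → ℝ} (hy : IsProbVec y) (M : Matrix ι κ ℝ)
    {t : ι} {c : ℝ} (hM : ∀ s, M t s ≤ c) : (M *ᵥ y) t ≤ c := by
  rw [mulVec, dotProduct_comm]
  exact hy.dotProduct_le hM

theorem single_half_add_single_half_dotProduct [Fintype ι] [DecidableEq ι] (i k : ι)
    (v : ι → ℝ) :
    (Pi.single i (1 / 2 : ℝ) + Pi.single k (1 / 2)) ⬝ᵥ v = v i / 2 + v k / 2 := by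
  rw [add_dotProduct, single_dotProduct, single_dotProduct]; ring

/-- **The simple 1/2-approximation algorithm** (Daskalakis–Mehta–Papadimitriou): in a
bimatrix game with payoffs in `[0,1]`, pick any row strategy `i`, a pure best response
`j` of the column player to `i`, and a pure best response `k` of the row player to `j`.
Then (row plays `i` and `k` with probability 1/2 each; column plays `j`) is a
`1/2`-approximate Nash equilibrium. -/
theorem half_approximate_nash {m n : ℕ}
    (A B : Matrix (Fin m) (Fin n) ℝ)
    (hA : ∀ i j, A i j ∈ Set.Icc (0 : ℝ) 1) (hB : ∀ i j, B i j ∈ Set.Icc (0 : ℝ) 1)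
    (i k : Fin m) (j : Fin n)
    (hj : ∀ j' : Fin n, B i j' ≤ B i j)
    (hk : ∀ i' : Fin m, A i' j ≤ A k j) :
    IsEpsNashEq A B (1 / 2)
      (fun t => (if t = i then (1 : ℝ) / 2 else 0) + (if t = k then (1 : ℝ) / 2 else 0))
      (fun t => if t = j then (1 : ℝ) else 0) := by
  have hx : (fun t => (if t = i then (1 : ℝ) / 2 else 0) + (if t = k then (1 : ℝ) / 2 else 0))
      = Pi.single i (1 / 2 : ℝ) + Pi.single k (1 / 2) := by
    ext t; simp only [Pi.add_apply, Pi.single_apply]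
  have hy : (fun t => if t = j then (1 : ℝ) else 0) = Pi.single j 1 := by
    ext t; rw [Pi.single_apply]
  rw [hx, hy, IsEpsNashEq]
  simp only [mulVec_single_one]
  refine ⟨isProbVec_single_half_add_single_half i k, isProbVec_single j,
    fun x' hx' => ?_, fun y' hy' => ?_⟩
  · have hdev : x' ⬝ᵥ A.col j ≤ A k j := hx'.dotProduct_le hk
    rw [single_half_add_single_half_dotProduct, col_apply, col_apply]
    linarith [(hA i j).1, (hA k j).2]
  · have hrow_i := hy'.mulVec_le B hj
    have hrow_k := hy'.mulVec_le B fun s => (hB k s).2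
    rw [single_half_add_single_half_dotProduct, single_half_add_single_half_dotProduct,
      col_apply, col_apply]
    linarith [(hB k j).1]
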